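/- Let G=(V,E) be a locally finite graph with symmetric positive edge weights, μ(x) ≥ μ_min > 0, h satisfying (H1) and (H2), and f satisfying (F1), (F2), (F3) with f(x,s)=0 for s ≤ 0. Then there exist positive constants δ and r such that J(u) ≥ δ for all u ∈ ℋ with ‖u‖_ℋ = r, where J(u) = (1/2)‖u‖_ℋ² − ∫_V F(x,u)dμ. -/

import Mathlib

open Filter Topology

namespace GraphNLE

variable {V : Type*}

/-- Integral of `g` over `V` w.r.t. the measure `μ`: `∫_V g dμ = Σ_x μ(x) g(x)`. -/
noncomputable def intV (μ g : V → ℝ) : ℝ := ∑' x, μ x * g x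

/-- The graph (μ-)Laplacian: `Δu(x) = (1/μ(x)) Σ_{y} w_{xy} (u(y)-u(x))`. -/
noncomputable def lap (w : V → V → ℝ) (μ u : V → ℝ) (x : V) : ℝ :=
  (1 / μ x) * ∑' y, w x y * (u y - u x)

/-- Squared length of the gradient: `|∇u|²(x) = (1/(2μ(x))) Σ_y w_{xy} (u(y)-u(x))²`. -/
noncomputable def gradSq (w : V → V → ℝ) (μ u : V → ℝ) (x : V) : ℝ :=
  (1 / (2 * μ x)) * ∑' y, w x y * (u y - u x) ^ 2

/-- The gradient form `Γ(u,v)(x) = (1/(2μ(x))) Σ_y w_{xy} (u(y)-u(x))(v(y)-v(x))`. -/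
noncomputable def gamma (w : V → V → ℝ) (μ u v : V → ℝ) (x : V) : ℝ :=
  (1 / (2 * μ x)) * ∑' y, w x y * (u y - u x) * (v y - v x)

/-- Membership in `W^{1,2}(V)`: finite `∫(|∇u|² + u²) dμ`. -/
def memW (w : V → V → ℝ) (μ u : V → ℝ) : Prop :=
  Summable (fun x => μ x * gradSq w μ u x) ∧ Summable (fun x => μ x * u x ^ 2)

/-- The `W^{1,2}` norm `(∫_V (|∇u|² + u²) dμ)^{1/2}`. -/
noncomputable def normW (w : V → V → ℝ) (μ u : V → ℝ) : ℝ :=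
  Real.sqrt (intV μ fun x => gradSq w μ u x + u x ^ 2)

/-- Membership in the space `ℋ`: finite `∫(|∇u|² + h u²) dμ`. -/
def memH (w : V → V → ℝ) (μ h u : V → ℝ) : Prop :=
  Summable (fun x => μ x * gradSq w μ u x) ∧ Summable (fun x => μ x * (h x * u x ^ 2))

/-- The norm of `ℋ`: `‖u‖_ℋ = (∫_V (|∇u|² + h u²) dμ)^{1/2}`. -/
noncomputable def normH (w : V → V → ℝ) (μ h u : V → ℝ) : ℝ :=
  Real.sqrt (intV μ fun x => gradSq w μ u x + h x * u x ^ 2)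

/-- The inner product of `ℋ`: `⟨u,v⟩_ℋ = ∫_V (Γ(u,v) + h u v) dμ`. -/
noncomputable def innerH (w : V → V → ℝ) (μ h u v : V → ℝ) : ℝ :=
  intV μ fun x => gamma w μ u v x + h x * u x * v x

/-- `λ₁ = inf { ∫(|∇u|² + h u²) dμ : u ∈ ℋ, ∫ u² dμ = 1 }`. -/
noncomputable def lambda1 (w : V → V → ℝ) (μ h : V → ℝ) : ℝ :=
  sInf {t : ℝ | ∃ u : V → ℝ, memH w μ h u ∧ intV μ (fun x => u x ^ 2) = 1 ∧
    intV μ (fun x => gradSq w μ u x + h x * u x ^ 2) = t}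

/-- The primitive `F(x,s) = ∫_0^s f(x,t) dt`. -/
noncomputable def Fint (f : V → ℝ → ℝ) (x : V) (s : ℝ) : ℝ := ∫ t in (0:ℝ)..s, f x t

/-- The functional `J(u) = (1/2)∫(|∇u|² + h u²) dμ − ∫ F(x,u) dμ`. -/
noncomputable def energy (w : V → V → ℝ) (μ h : V → ℝ) (f : V → ℝ → ℝ) (u : V → ℝ) : ℝ :=
  (1 / 2) * intV μ (fun x => gradSq w μ u x + h x * u x ^ 2) -
    intV μ (fun x => Fint f x (u x))

/-- The perturbed functional `J_ε(u) = J(u) − ε ∫ g u dμ`. -/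
noncomputable def energyP (w : V → V → ℝ) (μ h : V → ℝ) (f : V → ℝ → ℝ) (g : V → ℝ)
    (ε : ℝ) (u : V → ℝ) : ℝ :=
  energy w μ h f u - ε * intV μ (fun x => g x * u x)

/-- Weak convergence `u_k ⇀ u` in the Hilbert space `ℋ`. -/
def weakConvH (w : V → V → ℝ) (μ h : V → ℝ) (uk : ℕ → V → ℝ) (u : V → ℝ) : Prop :=
  ∀ v : V → ℝ, memH w μ h v →
    Tendsto (fun k => innerH w μ h (uk k) v) atTop (nhds (innerH w μ h u v))

/-- The `L^q(V,μ)` norm for finite `q`. -/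
noncomputable def LqNorm (μ : V → ℝ) (q : ℝ) (u : V → ℝ) : ℝ :=
  (intV μ fun x => |u x| ^ q) ^ (1 / q)

/-- The `L^∞(V)` norm `sup_x |u(x)|`. -/
noncomputable def LinfNorm (u : V → ℝ) : ℝ := ⨆ x, |u x|

/-- `g` (viewed via the pairing `u ↦ ∫ g u dμ`) belongs to the dual `ℋ'` of `ℋ`. -/
def memHdual (w : V → V → ℝ) (μ h g : V → ℝ) : Prop :=
  ∃ C : ℝ, ∀ u : V → ℝ, memH w μ h u →
    Summable (fun x => μ x * (g x * u x)) ∧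
    |intV μ fun x => g x * u x| ≤ C * normH w μ h u

/-- `u ∈ ℋ` is a weak solution of `−Δu + hu = f(x,u)`. -/
def weakSol (w : V → V → ℝ) (μ h : V → ℝ) (f : V → ℝ → ℝ) (u : V → ℝ) : Prop :=
  memH w μ h u ∧ ∀ φ : V → ℝ, memH w μ h φ →
    intV μ (fun x => gamma w μ u φ x + h x * u x * φ x) =
      intV μ (fun x => f x (u x) * φ x)

/-- `u ∈ ℋ` is a weak solution of the perturbed equation `−Δu + hu = f(x,u) + εg`. -/
def weakSolP (w : V → V → ℝ) (μ h : V → ℝ) (f : V → ℝ → ℝ) (g : V → ℝ) (ε : ℝ)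
    (u : V → ℝ) : Prop :=
  memH w μ h u ∧ ∀ φ : V → ℝ, memH w μ h φ →
    intV μ (fun x => gamma w μ u φ x + h x * u x * φ x) =
      intV μ (fun x => f x (u x) * φ x) + ε * intV μ (fun x => g x * φ x)

/-- The simple graph underlying the weights `w` (edges where the weight is nonzero). -/
def adjGraph (w : V → V → ℝ) : SimpleGraph V where
  Adj x y := x ≠ y ∧ (w x y ≠ 0 ∨ w y x ≠ 0)
  symm := ⟨fun x y hxy => ⟨hxy.1.symm, hxy.2.symm⟩⟩
  loopless := ⟨fun x hx => hx.1 rfl⟩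

/-! On the sphere `‖u‖_ℋ = r` the weights `μ ≥ μ_min` and `h ≥ h₀` give the pointwise bound
`√(μ_min h₀) |u(x)| ≤ r`, so for `r` small every value of `u` lies in the range `(−∞, ρ)` where
(F3) and `f(x,s) = 0` for `s ≤ 0` give `0 ≤ F(x,u) ≤ (c/2) u²` with `c < λ₁`. The Poincaré
inequality `λ₁ ∫u² ≤ ‖u‖_ℋ²` then yields `J(u) ≥ (1 − c/λ₁) r²/2 > 0`. -/

section Integral

variable {μ g g' : V → ℝ}

theorem intV_const_mul (a : ℝ) : intV μ (fun x => a * g x) = a * intV μ g := by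
  simp only [intV, ← tsum_mul_left]
  exact tsum_congr fun x => by ring

theorem intV_nonneg (hμ : ∀ x, 0 ≤ μ x) (hg : ∀ x, 0 ≤ g x) : 0 ≤ intV μ g :=
  tsum_nonneg fun x => mul_nonneg (hμ x) (hg x)

theorem intV_mono (hμ : ∀ x, 0 ≤ μ x) (hg : ∀ x, 0 ≤ g x) (hgg' : ∀ x, g x ≤ g' x)
    (hg' : Summable fun x => μ x * g' x) : intV μ g ≤ intV μ g' :=
  (hg'.of_nonneg_of_le (fun x => mul_nonneg (hμ x) (hg x))
    fun x => mul_le_mul_of_nonneg_left (hgg' x) (hμ x)).tsum_le_tsum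
    (fun x => mul_le_mul_of_nonneg_left (hgg' x) (hμ x)) hg'

end Integral

section Primitive

variable {f : V → ℝ → ℝ} {x : V} {s : ℝ}

theorem Fint_eq_zero_of_nonpos (hf : ∀ t ≤ 0, f x t = 0) (hs : s ≤ 0) : Fint f x s = 0 := by
  rw [Fint, intervalIntegral.integral_congr (g := fun _ => (0 : ℝ))]
  · simp
  · intro t ht
    rw [Set.uIcc_of_ge hs] at ht
    exact hf t ht.2

theorem Fint_nonneg (hpos : ∀ t, 0 < t → 0 < Fint f x t) (hf : ∀ t ≤ 0, f x t = 0) :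
    0 ≤ Fint f x s := by
  rcases le_or_gt s 0 with hs | hs
  · exact (Fint_eq_zero_of_nonpos hf hs).ge
  · exact (hpos s hs).le

theorem Fint_le_half_mul_sq {c ρ : ℝ} (hc : 0 ≤ c)
    (hsmall : ∀ t, 0 < t → t < ρ → 2 * Fint f x t ≤ c * t ^ 2) (hf : ∀ t ≤ 0, f x t = 0)
    (hs : s < ρ) : Fint f x s ≤ c / 2 * s ^ 2 := by
  rcases le_or_gt s 0 with hs₀ | hs₀
  · rw [Fint_eq_zero_of_nonpos hf hs₀]
    positivity
  · linarith [hsmall s hs₀ hs]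

end Primitive

section Hspace

variable {w : V → V → ℝ} {μ h u : V → ℝ}

theorem gradSq_nonneg {x : V} (hw : ∀ y, 0 ≤ w x y) (hμ : 0 ≤ μ x) : 0 ≤ gradSq w μ u x :=
  mul_nonneg (by positivity) (tsum_nonneg fun y => mul_nonneg (hw y) (sq_nonneg _))

theorem gradSq_const_mul (a : ℝ) (x : V) :
    gradSq w μ (fun y => a * u y) x = a ^ 2 * gradSq w μ u x := by
  simp only [gradSq, ← tsum_mul_left]
  exact tsum_congr fun y => by ring

theorem memH.const_mul (hu : memH w μ h u) (a : ℝ) : memH w μ h (fun x => a * u x) :=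
  ⟨(hu.1.mul_left (a ^ 2)).congr fun x => by rw [gradSq_const_mul]; ring,
    (hu.2.mul_left (a ^ 2)).congr fun x => by ring⟩

theorem memH.summable_sq {h₀ : ℝ} (hu : memH w μ h u) (hμ : ∀ x, 0 ≤ μ x) (hh₀ : 0 < h₀)
    (hH1 : ∀ x, h₀ ≤ h x) : Summable fun x => μ x * u x ^ 2 := by
  refine (hu.2.mul_left h₀⁻¹).of_nonneg_of_le (fun x => mul_nonneg (hμ x) (sq_nonneg _))
    fun x => ?_
  rw [← mul_assoc, mul_comm _ (μ x), mul_assoc]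
  refine mul_le_mul_of_nonneg_left ?_ (hμ x)
  rw [le_inv_mul_iff₀ hh₀]
  exact mul_le_mul_of_nonneg_right (hH1 x) (sq_nonneg _)

theorem gradSq_add_mul_sq_nonneg (hw : ∀ x y, 0 ≤ w x y) (hμ : ∀ x, 0 ≤ μ x)
    (hh : ∀ x, 0 ≤ h x) (v : V → ℝ) (x : V) : 0 ≤ gradSq w μ v x + h x * v x ^ 2 :=
  add_nonneg (gradSq_nonneg (hw x) (hμ x)) (by have := hh x; positivity)

theorem intV_gradSq_add_nonneg (hw : ∀ x y, 0 ≤ w x y) (hμ : ∀ x, 0 ≤ μ x)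
    (hh : ∀ x, 0 ≤ h x) (v : V → ℝ) : 0 ≤ intV μ (fun x => gradSq w μ v x + h x * v x ^ 2) :=
  intV_nonneg hμ (gradSq_add_mul_sq_nonneg hw hμ hh v)

theorem normH_sq (hw : ∀ x y, 0 ≤ w x y) (hμ : ∀ x, 0 ≤ μ x) (hh : ∀ x, 0 ≤ h x) :
    normH w μ h u ^ 2 = intV μ (fun x => gradSq w μ u x + h x * u x ^ 2) :=
  Real.sq_sqrt (intV_gradSq_add_nonneg hw hμ hh u)

theorem lambda1_mul_intV_sq_le (hw : ∀ x y, 0 ≤ w x y) (hμ : ∀ x, 0 ≤ μ x)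
    (hh : ∀ x, 0 ≤ h x) (hu : memH w μ h u) :
    lambda1 w μ h * intV μ (fun x => u x ^ 2) ≤
      intV μ (fun x => gradSq w μ u x + h x * u x ^ 2) := by
  set t := intV μ (fun x => u x ^ 2)
  set Q := intV μ (fun x => gradSq w μ u x + h x * u x ^ 2)
  have ht₀ : 0 ≤ t := intV_nonneg hμ fun x => sq_nonneg (u x)
  rcases ht₀.eq_or_lt with ht | ht
  · rw [← ht, mul_zero]
    exact intV_gradSq_add_nonneg hw hμ hh u
  -- normalise `u` to `v = u / √t`, an admissible function in the infimum defining `λ₁`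
  set a := (√t)⁻¹
  have ha : a ^ 2 * t = 1 := by rw [inv_pow, Real.sq_sqrt ht.le, inv_mul_cancel₀ ht.ne']
  have hv_sq : intV μ (fun x => (a * u x) ^ 2) = 1 := by
    simp only [mul_pow, intV_const_mul]
    exact ha
  have hv_Q : intV μ (fun x => gradSq w μ (fun y => a * u y) x + h x * (a * u x) ^ 2) =
      a ^ 2 * Q := by
    rw [← intV_const_mul]
    congr 1
    funext x
    rw [gradSq_const_mul]
    ring
  have hlam : lambda1 w μ h ≤ a ^ 2 * Q :=
    csInf_le ⟨0, fun _ ⟨v, _, _, hv⟩ => hv ▸ intV_gradSq_add_nonneg hw hμ hh v⟩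
      ⟨_, hu.const_mul a, hv_sq, hv_Q⟩
  calc lambda1 w μ h * t ≤ a ^ 2 * Q * t := mul_le_mul_of_nonneg_right hlam ht.le
    _ = Q := by rw [mul_right_comm, ha, one_mul]

theorem mul_sqrt_mul_abs_le_normH {μmin h₀ : ℝ} (hw : ∀ x y, 0 ≤ w x y) (hμ : ∀ x, 0 ≤ μ x)
    (hμmin : ∀ x, μmin ≤ μ x) (hh₀ : 0 ≤ h₀) (hH1 : ∀ x, h₀ ≤ h x) (hu : memH w μ h u) (x : V) :
    √(μmin * h₀) * |u x| ≤ normH w μ h u := by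
  rw [← Real.sqrt_sq_eq_abs, ← Real.sqrt_mul' _ (sq_nonneg _), normH]
  refine Real.sqrt_le_sqrt ?_
  have hμh : μmin * h₀ * u x ^ 2 ≤ μ x * (h x * u x ^ 2) := by
    rw [← mul_assoc]
    exact mul_le_mul_of_nonneg_right
      (mul_le_mul (hμmin x) (hH1 x) hh₀ (hμ x)) (sq_nonneg _)
  have hterm : μ x * (h x * u x ^ 2) ≤ μ x * (gradSq w μ u x + h x * u x ^ 2) :=
    mul_le_mul_of_nonneg_left (le_add_of_nonneg_left (gradSq_nonneg (hw x) (hμ x))) (hμ x)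
  have hsum : Summable fun x => μ x * (gradSq w μ u x + h x * u x ^ 2) :=
    (hu.1.add hu.2).congr fun x => by ring
  have hh : ∀ x, 0 ≤ h x := fun x => hh₀.trans (hH1 x)
  exact hμh.trans (hterm.trans (hsum.le_tsum x fun y _ =>
    mul_nonneg (hμ y) (gradSq_add_mul_sq_nonneg hw hμ hh u y)))

end Hspace

theorem energy_ge_of_Fint_le {w : V → V → ℝ} {μ h u : V → ℝ} {f : V → ℝ → ℝ} {h₀ c : ℝ}
    (hw : ∀ x y, 0 ≤ w x y) (hμ : ∀ x, 0 ≤ μ x) (hh₀ : 0 < h₀) (hH1 : ∀ x, h₀ ≤ h x)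
    (hu : memH w μ h u) (hc : 0 ≤ c) (hlam : 0 < lambda1 w μ h)
    (hF₀ : ∀ x, 0 ≤ Fint f x (u x)) (hF : ∀ x, Fint f x (u x) ≤ c / 2 * u x ^ 2) :
    (1 - c / lambda1 w μ h) / 2 * normH w μ h u ^ 2 ≤ energy w μ h f u := by
  have hh : ∀ x, 0 ≤ h x := fun x => hh₀.le.trans (hH1 x)
  set t := intV μ (fun x => u x ^ 2)
  set Q := intV μ (fun x => gradSq w μ u x + h x * u x ^ 2)
  have hFt : intV μ (fun x => Fint f x (u x)) ≤ c / 2 * t :=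
    (intV_mono hμ hF₀ hF (((hu.summable_sq hμ hh₀ hH1).mul_left (c / 2)).congr
      fun x => by ring)).trans_eq (intV_const_mul _)
  have htQ : t ≤ Q / lambda1 w μ h :=
    (le_div_iff₀ hlam).2 (by linarith [lambda1_mul_intV_sq_le hw hμ hh hu])
  have hct := mul_le_mul_of_nonneg_left htQ (by positivity : 0 ≤ c / 2)
  have hsplit : (1 - c / lambda1 w μ h) / 2 * Q = 1 / 2 * Q - c / 2 * (Q / lambda1 w μ h) := by
    ring
  rw [normH_sq hw hμ hh, hsplit, energy]
  linarith

theorem mountain_pass_geometry_general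
    (w : V → V → ℝ) (hwnn : ∀ x y, 0 ≤ w x y)
    (μ : V → ℝ) (μmin : ℝ) (hμmin : 0 < μmin) (hμ : ∀ x, μmin ≤ μ x)
    (h : V → ℝ) (h₀ : ℝ) (hh₀ : 0 < h₀) (hH1 : ∀ x, h₀ ≤ h x)
    (f : V → ℝ → ℝ)
    (hF2 : ∃ θ : ℝ, 2 < θ ∧ ∀ x, ∀ s : ℝ, 0 < s →
      0 < θ * Fint f x s ∧ θ * Fint f x s ≤ s * f x s)
    (hF3 : ∃ c : ℝ, c < lambda1 w μ h ∧ ∃ ρ : ℝ, 0 < ρ ∧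
      ∀ x, ∀ s : ℝ, 0 < s → s < ρ → 2 * Fint f x s ≤ c * s ^ 2)
    (hfneg : ∀ x, ∀ s : ℝ, s ≤ 0 → f x s = 0) :
    ∃ δ : ℝ, 0 < δ ∧ ∃ r : ℝ, 0 < r ∧
      ∀ u : V → ℝ, memH w μ h u → normH w μ h u = r → δ ≤ energy w μ h f u := by
  obtain ⟨θ, hθ, hθF⟩ := hF2
  obtain ⟨c, hc_lt, ρ, hρ, hFρ⟩ := hF3
  have hFpos : ∀ x s, 0 < s → 0 < Fint f x s :=
    fun x s hs => pos_of_mul_pos_right (hθF x s hs).1 (by linarith)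
  rcases isEmpty_or_nonempty V with hV | ⟨⟨x₀⟩⟩
  · exact ⟨1, one_pos, 1, one_pos, fun u _ hu => by simp [normH, intV] at hu⟩
  have hc : 0 < c := by
    nlinarith [hFpos x₀ (ρ / 2) (by linarith), hFρ x₀ (ρ / 2) (by linarith) (by linarith)]
  have hlam : 0 < lambda1 w μ h := hc.trans hc_lt
  have hμ₀ : ∀ x, 0 ≤ μ x := fun x => hμmin.le.trans (hμ x)
  refine ⟨(1 - c / lambda1 w μ h) / 2 * (√(μmin * h₀) * ρ / 2) ^ 2,
    by have := (div_lt_one hlam).2 hc_lt; positivity, √(μmin * h₀) * ρ / 2, by positivity,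
    fun u hu hr => ?_⟩
  have hu_lt : ∀ x, u x < ρ := fun x => by
    have hκ : 0 < √(μmin * h₀) := Real.sqrt_pos.2 (mul_pos hμmin hh₀)
    have hux := mul_sqrt_mul_abs_le_normH hwnn hμ₀ hμ hh₀.le hH1 hu x
    rw [hr, mul_div_assoc] at hux
    linarith [le_abs_self (u x), le_of_mul_le_mul_left hux hκ]
  rw [← hr]
  exact energy_ge_of_Fint_le hwnn hμ₀ hh₀ hH1 hu hc.le hlam
    (fun x => Fint_nonneg (hFpos x) (hfneg x))
    (fun x => Fint_le_half_mul_sq hc.le (hFρ x) (hfneg x) (hu_lt x))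

theorem mountain_pass_geometry
    (w : V → V → ℝ) (hsymm : ∀ x y, w x y = w y x) (hwnn : ∀ x y, 0 ≤ w x y)
    (hlf : ∀ x : V, {y | w x y ≠ 0}.Finite)
    (μ : V → ℝ) (μmin : ℝ) (hμmin : 0 < μmin) (hμ : ∀ x, μmin ≤ μ x)
    (h : V → ℝ) (h₀ : ℝ) (hh₀ : 0 < h₀) (hH1 : ∀ x, h₀ ≤ h x)
    (hH2 : Summable fun x => μ x * (1 / h x))
    (f : V → ℝ → ℝ)
    (hF1c : ∀ x, Continuous (f x)) (hF10 : ∀ x, f x 0 = 0)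
    (hF1b : ∀ M : ℝ, 0 < M → ∃ A : ℝ, ∀ x, ∀ s ∈ Set.Icc (0:ℝ) M, f x s ≤ A)
    (hF2 : ∃ θ : ℝ, 2 < θ ∧ ∀ x, ∀ s : ℝ, 0 < s →
      0 < θ * Fint f x s ∧ θ * Fint f x s ≤ s * f x s)
    (hF3 : ∃ c : ℝ, c < lambda1 w μ h ∧ ∃ ρ : ℝ, 0 < ρ ∧
      ∀ x, ∀ s : ℝ, 0 < s → s < ρ → 2 * Fint f x s ≤ c * s ^ 2)
    (hfneg : ∀ x, ∀ s : ℝ, s ≤ 0 → f x s = 0) :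
    ∃ δ : ℝ, 0 < δ ∧ ∃ r : ℝ, 0 < r ∧
      ∀ u : V → ℝ, memH w μ h u → normH w μ h u = r → δ ≤ energy w μ h f u :=
  mountain_pass_geometry_general w hwnn μ μmin hμmin hμ h h₀ hh₀ hH1 f hF2 hF3 hfneg

end GraphNLE
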